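/- arXiv:1209.5666 — 3 statements merged into one kernel-verified Lean document; each statement's English description precedes it below -/
import Mathlib

section
/- A homogeneous polynomial P of degree n in E[x,y] vanishes at every point of F_q^2 if and only if P is divisible by the Dickson invariant Θ = x·y^q − x^q·y. -/
/-!
Up to sign, `Θ = -y ∏_{c ∈ 𝔽_q} (x - c y)` is the product of the `q + 1` linear forms
vanishing at the points of the projective line over `𝔽_q`. For a homogeneous `P`, the form
`x - c y` divides `P` iff `P(c, 1) = 0`: modulo `x - c y` the polynomial `P(x, y)` becomes
`P(c y, y) = P(c, 1) y^n` by homogeneity (and likewise `y ∣ P` iff `P(1, 0) = 0`). These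
forms are pairwise non-associated primes, so their product divides `P` as soon as each does.
Conversely `Θ` vanishes on `𝔽_q²` because `a^q = a` there.
-/

open MvPolynomial

noncomputable section

variable (𝔽 : Type) [Field 𝔽] [Fintype 𝔽]
  (E : Type) [Field E] [IsAlgClosed E] [Algebra 𝔽 E]

/-- The Dickson invariant `Θ = x y^q − x^q y`. -/
def Theta (q : ℕ) : MvPolynomial (Fin 2) E := X 0 * X 1 ^ q - X 0 ^ q * X 1

namespace MvPolynomial

section Substitution

variable {σ R : Type*} [DecidableEq σ] [CommRing R]

theorem X_sub_dvd_sub_aeval_update (i : σ) (p φ : MvPolynomial σ R) :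
    X i - p ∣ φ - aeval (Function.update X i p) φ := by
  let I := Ideal.span {X i - p}
  suffices
      Ideal.Quotient.mkₐ R I = (Ideal.Quotient.mkₐ R I).comp (aeval (Function.update X i p)) by
    rw [← Ideal.mem_span_singleton, ← Ideal.Quotient.eq]
    exact congr($this φ)
  refine algHom_ext fun j => ?_
  rcases eq_or_ne j i with rfl | hj
  · simpa using Ideal.Quotient.eq.mpr (Ideal.mem_span_singleton_self _)
  · simp [hj]

theorem X_sub_dvd_iff_aeval_update_eq_zero {i : σ} {p : MvPolynomial σ R}
    (hp : aeval (Function.update X i p) p = p) (φ : MvPolynomial σ R) :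
    X i - p ∣ φ ↔ aeval (Function.update X i p) φ = 0 := by
  refine ⟨?_, fun h => by simpa only [h, sub_zero] using X_sub_dvd_sub_aeval_update i p φ⟩
  rintro ⟨ψ, rfl⟩
  rw [map_mul, map_sub, hp, aeval_X, Function.update_self, sub_self, zero_mul]

variable [IsDomain R]

theorem prime_X_sub {i : σ} {p : MvPolynomial σ R}
    (hp : aeval (Function.update X i p) p = p) (hne : X i - p ≠ 0) : Prime (X i - p) := by
  refine ⟨hne, fun hu => ?_, fun a b hab => ?_⟩
  · simpa using (X_sub_dvd_iff_aeval_update_eq_zero hp 1).mp hu.dvd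
  · simpa only [X_sub_dvd_iff_aeval_update_eq_zero hp, map_mul, mul_eq_zero] using hab

theorem prime_X_sub_C_mul_X {i j : σ} (hij : i ≠ j) (c : R) :
    Prime (X i - C c * X j : MvPolynomial σ R) := by
  refine prime_X_sub (by simp [hij.symm]) fun h => ?_
  simpa [Pi.single_apply, hij.symm] using congr(eval (Pi.single i 1) $h)

end Substitution

theorem IsHomogeneous.aeval_algebraMap_mul {σ R A : Type*} [CommSemiring R] [CommSemiring A]
    [Algebra R A] {φ : MvPolynomial σ R} {n : ℕ} (hφ : φ.IsHomogeneous n) (v : σ → R)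
    (t : A) :
    MvPolynomial.aeval (fun i => algebraMap R A (v i) * t) φ =
      algebraMap R A (eval v φ) * t ^ n := by
  conv_lhs => rw [φ.as_sum]
  rw [eval_eq, map_sum, map_sum, Finset.sum_mul]
  refine Finset.sum_congr rfl fun d hd => ?_
  rw [aeval_monomial, hφ.degree_eq_sum_deg_support hd, ← Finset.prod_pow_eq_pow_sum]
  simp only [Finsupp.prod, mul_pow, Finset.prod_mul_distrib, map_mul, map_prod, map_pow]
  ring

section BinaryForms

variable {R : Type*} [CommRing R] [IsDomain R]

theorem X_sub_C_mul_X_dvd_iff_eval_eq_zero {i j : Fin 2} (hij : i ≠ j) {v : Fin 2 → R}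
    (hv : v j = 1) {P : MvPolynomial (Fin 2) R} {n : ℕ} (hP : P.IsHomogeneous n) :
    X i - C (v i) * X j ∣ P ↔ eval v P = 0 := by
  have hsubst : Function.update X i (C (v i) * X j) = fun k => algebraMap R _ (v k) * X j := by
    funext k
    rcases eq_or_ne k i with rfl | hk
    · simp
    · obtain rfl : k = j := by omega
      simp [hk, hv]
  rw [X_sub_dvd_iff_aeval_update_eq_zero (by simp [hij.symm]), hsubst, hP.aeval_algebraMap_mul]
  simp [X_ne_zero]

theorem isRelPrime_X_sub_C_mul_X {i j : Fin 2} (hij : i ≠ j) {v : Fin 2 → R}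
    (hv : v j = 1) {Q : MvPolynomial (Fin 2) R} {n : ℕ} (hQ : Q.IsHomogeneous n)
    (h : eval v Q ≠ 0) : IsRelPrime (X i - C (v i) * X j) Q := by
  rwa [(prime_X_sub_C_mul_X hij _).irreducible.isRelPrime_iff_not_dvd,
    X_sub_C_mul_X_dvd_iff_eval_eq_zero hij hv hQ]

end BinaryForms

theorem X_mul_prod_dvd_of_eval_eq_zero {K ι : Type*} [Field K] [Fintype ι] {a : ι → K}
    (ha : Function.Injective a) {P : MvPolynomial (Fin 2) K} {n : ℕ} (hP : P.IsHomogeneous n)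
    (h_inf : eval ![1, 0] P = 0) (h_fin : ∀ c, eval ![a c, 1] P = 0) :
    X 1 * ∏ c, (X 0 - C (a c) * X 1) ∣ P := by
  set ℓ : ι → MvPolynomial (Fin 2) K := fun c => X 0 - C (a c) * X 1
  have h10 : (1 : Fin 2) ≠ 0 := by decide
  have hℓ_hom (c : ι) : (ℓ c).IsHomogeneous 1 :=
    (isHomogeneous_X K 0).sub (isHomogeneous_C_mul_X (a c) 1)
  have hX_dvd : X 1 ∣ P := by
    simpa using (X_sub_C_mul_X_dvd_iff_eval_eq_zero (v := ![1, 0]) h10 rfl hP).mpr h_inf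
  have hℓ_dvd (c : ι) : ℓ c ∣ P := by
    simpa using
      (X_sub_C_mul_X_dvd_iff_eval_eq_zero (v := ![a c, 1]) h10.symm rfl hP).mpr (h_fin c)
  have hℓ_coprime : Pairwise fun c d => IsRelPrime (ℓ c) (ℓ d) := fun c d hcd => by
    simpa using isRelPrime_X_sub_C_mul_X (v := ![a c, 1]) h10.symm rfl (hℓ_hom d)
      (by simpa [ℓ, sub_eq_zero] using ha.ne hcd)
  have hX_coprime : IsRelPrime (X 1) (∏ c, ℓ c) := IsRelPrime.prod_right fun c _ => by
    simpa [ℓ] using isRelPrime_X_sub_C_mul_X (v := ![1, 0]) h10 rfl (hℓ_hom c) (by simp [ℓ])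
  exact hX_coprime.mul_dvd hX_dvd (Fintype.prod_dvd_of_isRelPrime hℓ_coprime hℓ_dvd)

end MvPolynomial

theorem FiniteField.prod_X_sub_C_eq_X_pow_card_sub_X (F : Type*) [Field F] [Fintype F] :
    ∏ c : F, (Polynomial.X - Polynomial.C c) =
      (Polynomial.X ^ Fintype.card F - Polynomial.X : Polynomial F) := by
  have hmonic : (Polynomial.X ^ Fintype.card F - Polynomial.X : Polynomial F).Monic :=
    Polynomial.monic_X_pow_sub (by simpa using Fintype.one_lt_card)
  have hroots := roots_X_pow_card_sub_X F
  rw [← Polynomial.prod_multiset_X_sub_C_of_monic_of_roots_card_eq hmonic (by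
    rw [hroots, X_pow_card_sub_X_natDegree_eq F Fintype.one_lt_card]; rfl), hroots]
  rfl

theorem Theta_eq_neg_X_mul_prod (F : Type*) [Field F] [Fintype F] (K : Type) [Field K]
    [Algebra F K] :
    Theta K (Fintype.card F) = -(X 1 * ∏ c : F, (X 0 - C (algebraMap F K c) * X 1)) := by
  have hq := Fintype.card_ne_zero (α := F)
  have h := congr(Polynomial.homogenize (Polynomial.map (algebraMap F K)
    $(FiniteField.prod_X_sub_C_eq_X_pow_card_sub_X F)) (∑ _c : F, 1))
  rw [Polynomial.map_prod, Polynomial.homogenize_finsetProd fun c _ =>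
    Polynomial.natDegree_map_le.trans (Polynomial.natDegree_X_sub_C_le _)] at h
  simp only [Finset.sum_const, Finset.card_univ, smul_eq_mul, mul_one, Polynomial.map_sub,
    Polynomial.map_pow, Polynomial.map_X, Polynomial.map_C, Polynomial.homogenize_sub,
    Polynomial.homogenize_X_pow le_rfl, Polynomial.homogenize_X one_ne_zero,
    Polynomial.homogenize_X hq, Polynomial.homogenize_C, tsub_self, pow_zero, pow_one] at h
  rw [Theta, h, ← pow_sub_one_mul hq (X 1 : MvPolynomial (Fin 2) K)]
  ring

theorem eval_algebraMap_Theta (F : Type*) [Field F] [Fintype F] (K : Type) [Field K]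
    [Algebra F K] (v : Fin 2 → F) :
    eval (fun i => algebraMap F K (v i)) (Theta K (Fintype.card F)) = 0 := by
  simp only [Theta, map_sub, map_mul, map_pow, eval_X]
  rw [← map_pow, ← map_pow, FiniteField.pow_card, FiniteField.pow_card]
  ring

theorem vanishing_iff_dickson_dvd (n : ℕ) (P : MvPolynomial (Fin 2) E)
    (hP : P ∈ homogeneousSubmodule (Fin 2) E n) :
    (∀ v : Fin 2 → 𝔽, eval (fun i => algebraMap 𝔽 E (v i)) P = 0) ↔
      Theta E (Fintype.card 𝔽) ∣ P := by
  refine ⟨fun hv => ?_, ?_⟩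
  · rw [Theta_eq_neg_X_mul_prod, neg_dvd]
    refine X_mul_prod_dvd_of_eval_eq_zero (FaithfulSMul.algebraMap_injective 𝔽 E) hP ?_
      fun c => ?_
    · convert hv ![1, 0] using 3; funext i; fin_cases i <;> simp
    · convert hv ![c, 1] using 3; funext i; fin_cases i <;> simp
  · rintro ⟨Q, rfl⟩ v
    rw [map_mul, eval_algebraMap_Theta, zero_mul]
end
end

section
/- Fix f ≥ 1 and the directed graph with four vertices labeled by the functions x↦x, x↦p−1−x, x↦x+1, x↦p−2−x (with edges: loops at the top two vertices, x↦x+1 → x↦x, x↦x → x↦p−2−x, x↦p−1−x → x↦x+1, x↦p−2−x → x↦p−1−x, and edges both ways between x↦x+1 and x↦p−2−x). Then the number of closed paths of length f in this graph is exactly 2^f. -/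
/-!
STATEMENT 14: Consider the directed graph with four vertices labeled by the functions
`x ↦ x` (vertex 0), `x ↦ p−1−x` (vertex 1), `x ↦ x+1` (vertex 2), `x ↦ p−2−x` (vertex 3),
with edges: loops at vertices 0 and 1, `2 → 0`, `0 → 3`, `1 → 2`, `3 → 1`, and edges both
ways between `2` and `3`.  Then the number of closed paths of length `f` in this graph is
exactly `2^f`.  A closed path of length `f` is a sequence of vertices `c_0, …, c_{f−1}`
(cyclically indexed, so that `c_f = c_0`) with a directed edge from `c_i` to `c_{i+1}`.
-/

/-- The edge set of the graph. -/
def edges : Finset (Fin 4 × Fin 4) :=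
  {(0, 0), (1, 1), (2, 0), (0, 3), (1, 2), (3, 1), (2, 3), (3, 2)}

/-!
The graph is the binary de Bruijn graph of order 2: vertex `v` is a two-letter word whose second
letter records whether `v` is a reflection `x ↦ c − x`, and `u → v` is an edge exactly when the
second letter of `u` is the first letter of `v`. A closed walk in a de Bruijn graph is determined
by the periodic sequence of its last letters, so closed walks of length `f` correspond to binary
words of length `f`.
-/

open Function

section ClosedWalks

variable {V W α : Type*}

def IsClosedWalk (r : V → V → Prop) (f : ℕ) (c : ℕ → V) : Prop :=
  Periodic c f ∧ ∀ i, r (c i) (c (i + 1))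

def closedWalksCongr {r : V → V → Prop} {s : W → W → Prop} (e : V ≃ W)
    (he : ∀ u v, r u v ↔ s (e u) (e v)) (f : ℕ) :
    {c // IsClosedWalk r f c} ≃ {c // IsClosedWalk s f c} :=
  ((Equiv.refl ℕ).arrowCongr e).subtypeEquiv fun c => by
    simp only [IsClosedWalk, Periodic, he, Equiv.arrowCongr_apply, comp_apply,
      Equiv.refl_symm, Equiv.refl_apply, e.apply_eq_iff_eq]

variable (α) in
def DeBruijnAdj (u v : α × α) : Prop := u.2 = v.1

def closedWalksDeBruijnEquiv {f : ℕ} (hf : 0 < f) :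
    {c // IsClosedWalk (DeBruijnAdj α) f c} ≃ {a : ℕ → α // Periodic a f} where
  toFun c := ⟨Prod.snd ∘ c.1, c.2.1.comp _⟩
  -- `i + f - 1` is `i - 1` read cyclically, avoiding truncated subtraction at `i = 0`
  invFun a := ⟨fun i => (a.1 (i + f - 1), a.1 i), by
    refine ⟨fun i => Prod.ext ?_ (a.2 i), fun i => ?_⟩
    · show a.1 (i + f + f - 1) = a.1 (i + f - 1)
      rw [show i + f + f - 1 = i + f - 1 + f by omega, a.2]
    · show a.1 i = a.1 (i + 1 + f - 1)
      rw [show i + 1 + f - 1 = i + f by omega, a.2]⟩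
  left_inv c := by
    refine Subtype.ext (funext fun i => Prod.ext ?_ rfl)
    have hstep : (c.1 (i + f - 1)).2 = (c.1 (i + f - 1 + 1)).1 := c.2.2 _
    rw [show i + f - 1 + 1 = i + f by omega, c.2.1 i] at hstep
    exact hstep
  right_inv a := rfl

def periodicEquivFin {f : ℕ} (hf : 0 < f) : {a : ℕ → α // Periodic a f} ≃ (Fin f → α) where
  toFun a i := a.1 i
  invFun b := ⟨fun n => b ⟨n % f, Nat.mod_lt n hf⟩, fun n =>
    congrArg b (Fin.ext (Nat.add_mod_right n f))⟩
  left_inv a := Subtype.ext (funext a.2.map_mod_nat)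
  right_inv b := funext fun i => congrArg b (Fin.ext (Nat.mod_eq_of_lt i.2))

theorem card_closedWalks_deBruijnAdj {f : ℕ} (hf : 0 < f) :
    Nat.card {c // IsClosedWalk (DeBruijnAdj α) f c} = Nat.card α ^ f := by
  rw [Nat.card_congr ((closedWalksDeBruijnEquiv hf).trans (periodicEquivFin hf)),
    Nat.card_fun, Nat.card_fin]

end ClosedWalks

def edgesEquivDeBruijn : Fin 4 ≃ Bool × Bool where
  toFun := ![(false, false), (true, true), (true, false), (false, true)]
  invFun
    | (false, false) => 0
    | (true, true) => 1
    | (true, false) => 2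
    | (false, true) => 3
  left_inv := by decide
  right_inv := by decide

theorem mem_edges_iff_deBruijnAdj (u v : Fin 4) :
    (u, v) ∈ edges ↔ DeBruijnAdj Bool (edgesEquivDeBruijn u) (edgesEquivDeBruijn v) := by
  unfold DeBruijnAdj
  revert u v
  decide

theorem card_closed_paths (f : ℕ) (hf : 1 ≤ f) :
    -- closed paths of length `f` are encoded as `f`-periodic walks `c : ℕ → Fin 4`
    Nat.card {c : ℕ → Fin 4 // (∀ i, c (i + f) = c i) ∧ ∀ i, (c i, c (i + 1)) ∈ edges}
      = 2 ^ f := by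
  rw [show 2 = Nat.card Bool by simp, ← card_closedWalks_deBruijnAdj hf]
  exact Nat.card_congr (closedWalksCongr edgesEquivDeBruijn mem_edges_iff_deBruijnAdj f)
end

section
/- Let q = p^f and let 0 ≤ n ≤ q−1 have base-p digits n_0,…,n_{f−1}, with r_n the number of digits equal to p−1. Define ω(n) to be the number of closed paths c of length f in the graph on functions {x↦x, x↦p−1−x, x↦x+1, x↦p−2−x} that are compatible with n (i.e. 0 ≤ μ^c_i(n_i) ≤ p−1 for all i, where μ^c_i is the function at the i-th vertex) and such that μ^c(n) := Σ_i μ^c_i(n_i)p^i ≠ q−1. Then ω(0) = 2^f − 1, ω(q−1) = 1, and ω(n) = 2^{f−r_n} for 0 < n < q−1. -/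
/-- The function attached to each vertex of the graph. -/
def vf (p : ℕ) : Fin 4 → ℤ → ℤ := fun v x =>
  if v = 0 then x else if v = 1 then (p : ℤ) - 1 - x
  else if v = 2 then x + 1 else (p : ℤ) - 2 - x

/-- The `i`-th base-`p` digit of `n`, as an integer. -/
def digit (p n i : ℕ) : ℤ := ((Nat.digits p n).getD i 0 : ℤ)

/-- `ω(n)`: the number of closed paths of length `f` compatible with `n` such that
`μ^c(n) ≠ q − 1`. -/
noncomputable def omega (p f n : ℕ) : ℕ :=
  Nat.card {c : ℕ → Fin 4 //
    (∀ i, c (i + f) = c i) ∧ (∀ i, (c i, c (i + 1)) ∈ edges)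
    ∧ (∀ i < f, 0 ≤ vf p (c i) (digit p n i) ∧ vf p (c i) (digit p n i) ≤ (p : ℤ) - 1)
    ∧ (∑ i ∈ Finset.range f, vf p (c i) (digit p n i) * (p : ℤ) ^ i) ≠ (p : ℤ) ^ f - 1}

open Fin.CommRing

section Cyclic

variable {f : ℕ} [NeZero f]

theorem Fin.eq_of_forall_le_sub_one {α : Type*} [PartialOrder α] {s : Fin f → α}
    (h : ∀ i, s i ≤ s (i - 1)) (i j : Fin f) : s i = s j := by
  have hle : ∀ i j, s i ≤ s j := by
    have key : ∀ (k : ℕ) i, s i ≤ s (i - k) := by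
      intro k
      induction k with
      | zero => simp
      | succ k ih => exact fun i => (ih i).trans (by simpa [sub_sub] using h (i - k))
    intro i j
    simpa using key (i - j).val i
  exact (hle i j).antisymm (hle j i)

variable (D : Finset (Fin f))

theorem exists_sub_natCast_notMem (hD : D ≠ Finset.univ) (i : Fin f) : ∃ k : ℕ, i - k ∉ D := by
  obtain ⟨j, -, hj⟩ := Finset.exists_mem_notMem_of_card_lt_card
    (Finset.card_lt_card (Finset.ssubset_univ_iff.mpr hD))
  exact ⟨(i - j).val, by simpa using hj⟩

def stepsToOutside (hD : D ≠ Finset.univ) (i : Fin f) : ℕ :=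
  Nat.find (exists_sub_natCast_notMem D hD i)

def prevOutside (hD : D ≠ Finset.univ) (i : Fin f) : Fin f := i - stepsToOutside D hD i

theorem prevOutside_notMem (hD : D ≠ Finset.univ) (i : Fin f) : prevOutside D hD i ∉ D :=
  Nat.find_spec (exists_sub_natCast_notMem D hD i)

theorem stepsToOutside_eq_zero_iff (hD : D ≠ Finset.univ) {i : Fin f} :
    stepsToOutside D hD i = 0 ↔ i ∉ D := by
  simp [stepsToOutside, Nat.find_eq_zero]

theorem prevOutside_of_notMem (hD : D ≠ Finset.univ) {i : Fin f} (hi : i ∉ D) :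
    prevOutside D hD i = i := by
  simp [prevOutside, (stepsToOutside_eq_zero_iff D hD).mpr hi]

theorem stepsToOutside_sub_one (hD : D ≠ Finset.univ) {i : Fin f} (hi : i ∈ D) :
    stepsToOutside D hD (i - 1) + 1 = stepsToOutside D hD i := by
  set k := stepsToOutside D hD i
  have hk : k ≠ 0 := fun h => (stepsToOutside_eq_zero_iff D hD).mp h hi
  have h₁ : stepsToOutside D hD (i - 1) ≤ k - 1 := Nat.find_le <| by
    rw [Nat.cast_sub (Nat.one_le_iff_ne_zero.mpr hk), Nat.cast_one, sub_sub, add_sub_cancel]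
    exact prevOutside_notMem D hD i
  have h₂ : k ≤ stepsToOutside D hD (i - 1) + 1 := Nat.find_le <| by
    rw [Nat.cast_succ, add_comm, ← sub_sub]
    exact prevOutside_notMem D hD (i - 1)
  omega

theorem prevOutside_sub_one (hD : D ≠ Finset.univ) {i : Fin f} (hi : i ∈ D) :
    prevOutside D hD (i - 1) = prevOutside D hD i := by
  rw [prevOutside, prevOutside, ← stepsToOutside_sub_one D hD hi, Nat.cast_succ, add_comm,
    sub_sub]

theorem apply_prevOutside (hD : D ≠ Finset.univ) {α : Type*} {s : Fin f → α}
    (hs : ∀ i ∈ D, s i = s (i - 1)) (i : Fin f) : s (prevOutside D hD i) = s i := by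
  induction hk : stepsToOutside D hD i generalizing i with
  | zero => simp [prevOutside, hk]
  | succ k ih =>
    have hi : i ∈ D := by simpa [hk] using (stepsToOutside_eq_zero_iff D hD (i := i)).not
    rw [← prevOutside_sub_one D hD hi, hs i hi]
    exact ih (i - 1) (by have := stepsToOutside_sub_one D hD hi; omega)

def restrictOutsideEquiv (hD : D ≠ Finset.univ) (α : Type*) :
    {s : Fin f → α // ∀ i ∈ D, s i = s (i - 1)} ≃ ({i // i ∉ D} → α) where
  toFun s j := s.1 j
  invFun t := ⟨fun i => t ⟨_, prevOutside_notMem D hD i⟩, fun i hi => by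
    simp only [prevOutside_sub_one D hD hi]⟩
  left_inv s := Subtype.ext <| funext <| apply_prevOutside D hD s.2
  right_inv t := funext fun j => by simp only [prevOutside_of_notMem D hD j.2]

theorem card_fun_forall_mem_eq_sub_one (hD : D ≠ Finset.univ) (α : Type*) :
    Nat.card {s : Fin f → α // ∀ i ∈ D, s i = s (i - 1)} = Nat.card α ^ (f - D.card) := by
  rw [Nat.card_congr (restrictOutsideEquiv D hD α), Nat.card_fun]
  simp

end Cyclic

def flips (v : Fin 4) : Bool := v = 1 ∨ v = 3

def vertexOf : Bool → Bool → Fin 4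
  | false, false => 0
  | true, true => 1
  | false, true => 2
  | true, false => 3

theorem flips_vertexOf (b a : Bool) : flips (vertexOf b a) = b := by
  cases b <;> cases a <;> rfl

theorem mem_edges_iff (u v : Fin 4) : (u, v) ∈ edges ↔ v = vertexOf (flips v) (flips u) := by
  revert u v; decide

section Walks

variable {f : ℕ} [NeZero f]

def walkOf (s : Fin f → Bool) (k : ℕ) : Fin 4 := vertexOf (s k) (s (k - 1))

theorem walkOf_val (s : Fin f → Bool) (i : Fin f) :
    walkOf s i = vertexOf (s i) (s (i - 1)) := by
  simp [walkOf]

theorem walkOf_add_period (s : Fin f → Bool) (k : ℕ) : walkOf s (k + f) = walkOf s k := by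
  simp [walkOf]

theorem walkOf_mem_edges (s : Fin f → Bool) (k : ℕ) : (walkOf s k, walkOf s (k + 1)) ∈ edges := by
  simp [walkOf, mem_edges_iff, flips_vertexOf]

theorem walkOf_injective : Function.Injective (walkOf (f := f)) := fun s t h =>
  funext fun i => by simpa [walkOf_val, flips_vertexOf] using congrArg flips (congrFun h i)

theorem walkOf_flips {c : ℕ → Fin 4} (hper : ∀ k, c (k + f) = c k)
    (hedge : ∀ k, (c k, c (k + 1)) ∈ edges) : walkOf (fun j : Fin f => flips (c j)) = c := by
  have hmod : ∀ k, c (k % f) = c k := Function.Periodic.map_mod_nat hper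
  have hsucc : ∀ k, walkOf (fun j : Fin f => flips (c j)) (k + 1) = c (k + 1) := fun k => by
    rw [(mem_edges_iff _ _).mp (hedge k), walkOf, Nat.cast_succ, add_sub_cancel_right,
      ← Nat.cast_succ, Fin.val_natCast, Fin.val_natCast, hmod, hmod]
  funext k
  cases k with
  | zero =>
    have hlast := hsucc (f - 1)
    rw [Nat.sub_one_add_one (NeZero.ne f)] at hlast
    rw [← walkOf_add_period, zero_add, hlast, ← hper 0, zero_add]
  | succ k => exact hsucc k

theorem card_closedWalks (P : (ℕ → Fin 4) → Prop) :
    Nat.card {c : ℕ → Fin 4 // (∀ i, c (i + f) = c i) ∧ (∀ i, (c i, c (i + 1)) ∈ edges) ∧ P c}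
      = Nat.card {s : Fin f → Bool // P (walkOf s)} := by
  refine (Nat.card_eq_of_bijective
    (fun s => ⟨walkOf s.1, walkOf_add_period s.1, walkOf_mem_edges s.1, s.2⟩) ⟨?_, ?_⟩).symm
  · exact fun s t h => Subtype.ext (walkOf_injective (congrArg Subtype.val h))
  · rintro ⟨c, hper, hedge, hP⟩
    refine ⟨⟨fun j => flips (c j), ?_⟩, Subtype.ext (walkOf_flips hper hedge)⟩
    rwa [walkOf_flips hper hedge]

end Walks

theorem sum_mul_pow_eq_pow_sub_one_iff {p f : ℕ} (hp : 0 < p) {t : ℕ → ℤ}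
    (ht : ∀ i < f, 0 ≤ t i ∧ t i ≤ p - 1) :
    ∑ i ∈ Finset.range f, t i * p ^ i = p ^ f - 1 ↔ ∀ i < f, t i = p - 1 := by
  have hgeom : ∑ i ∈ Finset.range f, ((p : ℤ) - 1) * p ^ i = p ^ f - 1 := by
    rw [← Finset.mul_sum, mul_comm, geom_sum_mul]
  constructor
  · intro h
    by_contra! hne
    obtain ⟨j, hj, hne⟩ := hne
    have hlt : ∑ i ∈ Finset.range f, t i * p ^ i < ∑ i ∈ Finset.range f, ((p : ℤ) - 1) * p ^ i :=
      Finset.sum_lt_sum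
        (fun i hi => mul_le_mul_of_nonneg_right (ht i (Finset.mem_range.mp hi)).2 (by positivity))
        ⟨j, Finset.mem_range.mpr hj,
          mul_lt_mul_of_pos_right ((ht j hj).2.lt_of_ne hne) (by positivity)⟩
    omega
  · intro h
    rw [Finset.sum_congr rfl fun i hi => by rw [h i (Finset.mem_range.mp hi)], hgeom]

section Digits

variable {p : ℕ}

theorem digit_eq_div_pow_mod (hp : 2 ≤ p) (n i : ℕ) : digit p n i = (n / p ^ i % p : ℕ) := by
  rw [digit, Nat.getD_digits n i hp]

theorem digit_nonneg (n i : ℕ) : 0 ≤ digit p n i := Int.natCast_nonneg _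

theorem digit_le_sub_one (hp : 2 ≤ p) (n i : ℕ) : digit p n i ≤ p - 1 := by
  have := Nat.mod_lt (n / p ^ i) (by omega : 0 < p)
  rw [digit_eq_div_pow_mod hp]
  omega

theorem digit_eq_sub_one_iff (hp : 1 ≤ p) (n i : ℕ) :
    digit p n i = p - 1 ↔ (Nat.digits p n).getD i 0 = p - 1 := by
  rw [digit]
  omega

theorem sum_digit_mul_pow (hp : 2 ≤ p) {n f : ℕ} (hn : n < p ^ f) :
    ∑ i ∈ Finset.range f, digit p n i * p ^ i = n := by
  have key : ∀ f, ∑ i ∈ Finset.range f, n / p ^ i % p * p ^ i = n % p ^ f := by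
    intro f
    induction f with
    | zero => simp [Nat.mod_one]
    | succ f ih => rw [Finset.sum_range_succ, ih, Nat.mod_pow_succ, mul_comm]
  simp only [digit_eq_div_pow_mod hp]
  exact_mod_cast (key f).trans (Nat.mod_eq_of_lt hn)

theorem eq_zero_of_forall_digit_eq_zero (hp : 2 ≤ p) {n f : ℕ} (hn : n < p ^ f)
    (h : ∀ i < f, digit p n i = 0) : n = 0 := by
  have := sum_digit_mul_pow hp hn
  rw [Finset.sum_eq_zero fun i hi => by rw [h i (Finset.mem_range.mp hi), zero_mul]] at this
  omega

theorem forall_digit_eq_sub_one_iff (hp : 2 ≤ p) {n f : ℕ} (hn : n < p ^ f) :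
    (∀ i < f, digit p n i = p - 1) ↔ n = p ^ f - 1 := by
  rw [← sum_mul_pow_eq_pow_sub_one_iff (by omega)
    fun i _ => ⟨digit_nonneg n i, digit_le_sub_one hp n i⟩, sum_digit_mul_pow hp hn]
  have : 1 ≤ p ^ f := Nat.one_le_pow _ _ (by omega)
  rw [← Nat.cast_pow]
  omega

end Digits

section Omega

variable {p : ℕ}

theorem vf_vertexOf_bounded_iff {x : ℤ} (hx₀ : 0 ≤ x) (hx : x ≤ p - 1) (b a : Bool) :
    (0 ≤ vf p (vertexOf b a) x ∧ vf p (vertexOf b a) x ≤ p - 1) ↔ (x = p - 1 → b = a) := by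
  cases b <;> cases a <;> simp [vertexOf, vf] <;> omega

variable {f : ℕ} [NeZero f]

theorem forall_vf_vertexOf_eq_sub_one_iff {d : Fin f → ℤ} (hd : ∀ i, 0 ≤ d i) (s : Fin f → Bool) :
    (∀ i, vf p (vertexOf (s i) (s (i - 1))) (d i) = p - 1) ↔
      (s = (fun _ => false) ∧ ∀ i, d i = p - 1) ∨ (s = (fun _ => true) ∧ ∀ i, d i = 0) := by
  constructor
  · intro h
    -- `x ↦ p - 2 - x` never takes the value `p - 1`
    have hanti : ∀ i, s i ≤ s (i - 1) := fun i => by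
      have h₁ := h i
      have h₂ := hd i
      cases hsi : s i <;> cases hsj : s (i - 1) <;> simp [hsi, hsj, vertexOf, vf] at h₁ ⊢
      omega
    obtain ⟨b, rfl⟩ : ∃ b, s = fun _ => b :=
      ⟨s 0, funext fun i => Fin.eq_of_forall_le_sub_one hanti i 0⟩
    cases b
    · exact .inl ⟨rfl, fun i => by simpa [vertexOf, vf] using h i⟩
    · exact .inr ⟨rfl, fun i => by have := h i; simp [vertexOf, vf] at this; omega⟩
  · rintro (⟨rfl, hd'⟩ | ⟨rfl, hd'⟩) i <;> simp [vertexOf, vf, hd']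

theorem omega_eq_card (hp : 2 ≤ p) (n : ℕ) :
    omega p f n = Nat.card {s : Fin f → Bool //
      (∀ i : Fin f, digit p n i = p - 1 → s i = s (i - 1)) ∧
      ¬ ((s = (fun _ => false) ∧ ∀ i : Fin f, digit p n i = p - 1) ∨
          (s = (fun _ => true) ∧ ∀ i : Fin f, digit p n i = 0))} := by
  rw [omega, card_closedWalks]
  refine Nat.card_congr (Equiv.subtypeEquivRight fun s => ?_)
  have hcompat : (∀ i < f, 0 ≤ vf p (walkOf s i) (digit p n i) ∧
      vf p (walkOf s i) (digit p n i) ≤ p - 1) ↔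
        ∀ i : Fin f, digit p n i = p - 1 → s i = s (i - 1) := by
    simp only [← vf_vertexOf_bounded_iff (digit_nonneg n _) (digit_le_sub_one hp n _),
      ← walkOf_val]
    exact ⟨fun h i => h i i.isLt, fun h i hi => h ⟨i, hi⟩⟩
  rw [← hcompat]
  refine and_congr_right fun hc => not_congr ?_
  rw [sum_mul_pow_eq_pow_sub_one_iff (by omega) hc,
    ← forall_vf_vertexOf_eq_sub_one_iff (fun i => digit_nonneg n i)]
  simp only [← walkOf_val]
  exact ⟨fun h i => h i i.isLt, fun h i hi => h ⟨i, hi⟩⟩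

theorem omega_zero (hp : 2 ≤ p) : omega p f 0 = 2 ^ f - 1 := by
  have hd : ∀ i, digit p 0 i = 0 := by simp [digit]
  have hp1 : (0 : ℤ) ≠ p - 1 := by omega
  rw [omega_eq_card hp]
  simp only [hd, hp1, false_imp_iff, implies_true, and_false, forall_const, true_and,
    false_or]
  rw [Nat.card_eq_fintype_card, Fintype.card_subtype_compl, Fintype.card_fun]
  simp

theorem omega_pow_sub_one (hp : 2 ≤ p) : omega p f (p ^ f - 1) = 1 := by
  have hd : ∀ i : Fin f, digit p (p ^ f - 1) i = p - 1 := fun i =>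
    (forall_digit_eq_sub_one_iff hp (Nat.sub_lt (by positivity) one_pos)).mpr rfl i i.isLt
  have hp1 : (p : ℤ) - 1 ≠ 0 := by omega
  rw [omega_eq_card hp]
  simp only [hd, hp1, forall_const, and_true, and_false, or_false]
  have hconst : ∀ s : Fin f → Bool,
      ((∀ i, s i = s (i - 1)) ∧ ¬ s = fun _ => false) ↔ s = fun _ => true := fun s => by
    refine ⟨fun ⟨h, hne⟩ => ?_, by rintro rfl; simp [funext_iff]⟩
    obtain ⟨b, rfl⟩ : ∃ b, s = fun _ => b :=
      ⟨s 0, funext fun i => Fin.eq_of_forall_le_sub_one (fun i => (h i).le) i 0⟩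
    cases b <;> simp_all [funext_iff]
  rw [Nat.card_congr (Equiv.subtypeEquivRight hconst)]
  exact Nat.card_unique

theorem omega_of_pos_of_lt (hp : 2 ≤ p) {n : ℕ} (hn₀ : 0 < n) (hn : n < p ^ f - 1) :
    omega p f n =
      2 ^ (f - ((Finset.range f).filter fun i => (Nat.digits p n).getD i 0 = p - 1).card) := by
  have hnf : n < p ^ f := by omega
  set D := Finset.univ.filter fun i : Fin f => digit p n i = p - 1
  have hmax : ¬ ∀ i : Fin f, digit p n i = p - 1 := fun h =>
    hn.ne <| (forall_digit_eq_sub_one_iff hp hnf).mp fun i hi => h ⟨i, hi⟩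
  have hD : D ≠ Finset.univ := by simpa [D, Finset.filter_eq_self] using hmax
  have hzero : ¬ ∀ i : Fin f, digit p n i = 0 := fun h => hn₀.ne' <|
    eq_zero_of_forall_digit_eq_zero hp hnf fun i hi => h ⟨i, hi⟩
  rw [omega_eq_card hp]
  simp only [hmax, hzero, and_false, or_false, not_false_eq_true, and_true]
  have hcard :
      D.card = ((Finset.range f).filter fun i => (Nat.digits p n).getD i 0 = p - 1).card := by
    rw [← Nat.Iio_eq_range, ← Fin.map_valEmbedding_univ, Finset.filter_map, Finset.card_map]
    simp only [D, digit_eq_sub_one_iff (by omega : 1 ≤ p)]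
    rfl
  rw [← hcard, ← Fintype.card_bool, ← Nat.card_eq_fintype_card,
    ← card_fun_forall_mem_eq_sub_one D hD Bool]
  exact Nat.card_congr (Equiv.subtypeEquivRight fun s => by simp [D])

end Omega

theorem omega_values (p f : ℕ) (hp : p.Prime) (hf : 1 ≤ f) :
    omega p f 0 = 2 ^ f - 1
    ∧ omega p f (p ^ f - 1) = 1
    ∧ ∀ n : ℕ, 0 < n → n < p ^ f - 1 →
        omega p f n
          = 2 ^ (f - ((Finset.range f).filter
              (fun i => (Nat.digits p n).getD i 0 = p - 1)).card) := by
  have : NeZero f := ⟨by omega⟩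
  exact ⟨omega_zero hp.two_le, omega_pow_sub_one hp.two_le,
    fun n hn₀ hn => omega_of_pos_of_lt hp.two_le hn₀ hn⟩
end
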